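/- arXiv:2605.10446 — 6 statements merged into one kernel-verified Lean document; each statement's English description precedes it below -/
import Mathlib

section
/- Let a, b, s, t ≥ 0 be real numbers, 1 < p < ∞, σ > p−1, and set η = σ−p+1. Then Φ_p(a−b)(s^σ − t^σ) ≤ (σ/η) Φ_p(as − bt)(s^η − t^η). -/
/-- `Φ_p(t) = |t|^{p-2} t`. -/
noncomputable def Phi (p t : ℝ) : ℝ := |t| ^ (p - 2) * t

lemma phi_neg (p x : ℝ) : Phi p (-x) = - Phi p x := by
  unfold Phi; rw [abs_neg]; ring

lemma phi_of_nonneg {q x : ℝ} (hq : 0 < q) (hx : 0 ≤ x) : Phi (q + 1) x = x ^ q := by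
  unfold Phi
  rw [abs_of_nonneg hx]
  rcases eq_or_lt_of_le hx with h | h
  · rw [← h, mul_zero, Real.zero_rpow hq.ne']
  · rw [show q + 1 - 2 = (q - 1) by ring, ← Real.rpow_add_one h.ne' (q - 1),
      show q - 1 + 1 = q by ring]

/-- Weighted AM-GM in the form we need. -/
lemma amgm {s t q η : ℝ} (hs : 0 ≤ s) (ht : 0 ≤ t) (hq : 0 < q) (hη : 0 < η) :
    (q + η) * (s ^ q * t ^ η) ≤ q * s ^ (q + η) + η * t ^ (q + η) := by
  have hpos : 0 < q + η := by linarith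
  have hsum : q / (q + η) + η / (q + η) = 1 := by field_simp
  have h := Real.geom_mean_le_arith_mean2_weighted (by positivity) (by positivity)
    (Real.rpow_nonneg hs (q + η)) (Real.rpow_nonneg ht (q + η)) hsum
  have e1 : (s ^ (q + η)) ^ (q / (q + η)) = s ^ q := by
    rw [← Real.rpow_mul hs]; congr 1; field_simp
  have e2 : (t ^ (q + η)) ^ (η / (q + η)) = t ^ η := by
    rw [← Real.rpow_mul ht]; congr 1; field_simp
  rw [e1, e2] at h
  have h2 := mul_le_mul_of_nonneg_left h hpos.le
  have e3 : (q + η) * (q / (q + η) * s ^ (q + η) + η / (q + η) * t ^ (q + η))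
      = q * s ^ (q + η) + η * t ^ (q + η) := by field_simp
  linarith [e3 ▸ h2]

lemma key (a b s t q η : ℝ) (ha : 0 ≤ a) (hb : 0 ≤ b) (ht : 0 ≤ t) (hts : t ≤ s)
    (hq : 0 < q) (hη : 0 < η) :
    Phi (q + 1) (a - b) * (s ^ (q + η) - t ^ (q + η)) ≤
      ((q + η) / η) * Phi (q + 1) (a * s - b * t) * (s ^ η - t ^ η) := by
  have hs : 0 ≤ s := le_trans ht hts
  have hpos : 0 < q + η := by linarith
  have hηt : t ^ η ≤ s ^ η := Real.rpow_le_rpow ht hts hη.le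
  have hσt : t ^ (q + η) ≤ s ^ (q + η) := Real.rpow_le_rpow ht hts hpos.le
  have hss : s ^ (q + η) = s ^ q * s ^ η := Real.rpow_add' hs hpos.ne'
  have htt : t ^ (q + η) = t ^ q * t ^ η := Real.rpow_add' ht hpos.ne'
  rcases le_total b a with hab | hab
  · -- a ≥ b, so a - b ≥ 0 and a*s - b*t ≥ 0
    have h1 : 0 ≤ a - b := by linarith
    have h2 : 0 ≤ a * s - b * t := by nlinarith
    rw [phi_of_nonneg hq h1, phi_of_nonneg hq h2]
    have hAM := amgm hs ht hq hη
    have step1 : s ^ (q + η) - t ^ (q + η) ≤ (q + η) / η * (s ^ q * (s ^ η - t ^ η)) := by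
      rw [div_mul_eq_mul_div, le_div_iff₀ hη]
      nlinarith [hAM, hss]
    have hmul : ((a - b) * s) ^ q = (a - b) ^ q * s ^ q := Real.mul_rpow h1 hs
    have hmono : ((a - b) * s) ^ q ≤ (a * s - b * t) ^ q := by
      apply Real.rpow_le_rpow (by positivity) (by nlinarith) hq.le
    calc (a - b) ^ q * (s ^ (q + η) - t ^ (q + η))
        ≤ (a - b) ^ q * ((q + η) / η * (s ^ q * (s ^ η - t ^ η))) := by
          apply mul_le_mul_of_nonneg_left step1 (Real.rpow_nonneg h1 q)
      _ = (q + η) / η * (((a - b) * s) ^ q * (s ^ η - t ^ η)) := by rw [hmul]; ring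
      _ ≤ (q + η) / η * ((a * s - b * t) ^ q * (s ^ η - t ^ η)) := by
          apply mul_le_mul_of_nonneg_left _ (by positivity)
          exact mul_le_mul_of_nonneg_right hmono (by linarith)
      _ = (q + η) / η * (a * s - b * t) ^ q * (s ^ η - t ^ η) := by ring
  · -- a ≤ b
    have h1 : Phi (q + 1) (a - b) = -((b - a) ^ q) := by
      rw [show a - b = -(b - a) by ring, phi_neg, phi_of_nonneg hq (by linarith)]
    rcases le_total 0 (a * s - b * t) with h2 | h2
    · -- RHS nonneg, LHS nonpos
      rw [h1, phi_of_nonneg hq h2]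
      have hL : -((b - a) ^ q) * (s ^ (q + η) - t ^ (q + η)) ≤ 0 := by
        apply mul_nonpos_of_nonpos_of_nonneg
        · simp [Real.rpow_nonneg (show (0:ℝ) ≤ b - a by linarith) q]
        · linarith
      have hR : 0 ≤ (q + η) / η * (a * s - b * t) ^ q * (s ^ η - t ^ η) := by
        apply mul_nonneg (mul_nonneg (by positivity) (Real.rpow_nonneg h2 q)) (by linarith)
      linarith
    · -- a*s - b*t ≤ 0
      have h3 : Phi (q + 1) (a * s - b * t) = -((b * t - a * s) ^ q) := by
        rw [show a * s - b * t = -(b * t - a * s) by ring, phi_neg,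
          phi_of_nonneg hq (by linarith)]
      rw [h1, h3]
      have hAM := amgm ht hs hq hη
      have step2 : (q + η) / η * (t ^ q * (s ^ η - t ^ η)) ≤ s ^ (q + η) - t ^ (q + η) := by
        rw [div_mul_eq_mul_div, div_le_iff₀ hη]
        nlinarith [hAM, htt]
      have hmul : ((b - a) * t) ^ q = (b - a) ^ q * t ^ q :=
        Real.mul_rpow (by linarith) ht
      have hmono : (b * t - a * s) ^ q ≤ ((b - a) * t) ^ q := by
        apply Real.rpow_le_rpow (by linarith) (by nlinarith) hq.le
      have main : (q + η) / η * ((b * t - a * s) ^ q) * (s ^ η - t ^ η)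
          ≤ (b - a) ^ q * (s ^ (q + η) - t ^ (q + η)) := by
        calc (q + η) / η * ((b * t - a * s) ^ q) * (s ^ η - t ^ η)
            ≤ (q + η) / η * (((b - a) * t) ^ q) * (s ^ η - t ^ η) := by
              apply mul_le_mul_of_nonneg_right _ (by linarith)
              exact mul_le_mul_of_nonneg_left hmono (by positivity)
          _ = (b - a) ^ q * ((q + η) / η * (t ^ q * (s ^ η - t ^ η))) := by rw [hmul]; ring
          _ ≤ (b - a) ^ q * (s ^ (q + η) - t ^ (q + η)) := by
              apply mul_le_mul_of_nonneg_left step2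
                (Real.rpow_nonneg (show (0:ℝ) ≤ b - a by linarith) q)
      nlinarith [main]

/-- For `a, b, s, t ≥ 0`, `1 < p`, `σ > p - 1` and `η = σ - p + 1`,
`Φ_p(a-b)(s^σ - t^σ) ≤ (σ/η) Φ_p(as - bt)(s^η - t^η)`. -/
theorem stmt2 (a b s t p σ : ℝ) (ha : 0 ≤ a) (hb : 0 ≤ b) (hs : 0 ≤ s) (ht : 0 ≤ t)
    (hp : 1 < p) (hσ : p - 1 < σ) :
    Phi p (a - b) * (s ^ σ - t ^ σ) ≤
      (σ / (σ - p + 1)) * Phi p (a * s - b * t) * (s ^ (σ - p + 1) - t ^ (σ - p + 1)) := by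
  have hq : 0 < p - 1 := by linarith
  have hη : 0 < σ - p + 1 := by linarith
  rcases le_total t s with hts | hst
  · have h := key a b s t (p - 1) (σ - p + 1) ha hb ht hts hq hη
    rw [show p - 1 + 1 = p by ring, show p - 1 + (σ - p + 1) = σ by ring] at h
    exact h
  · have h := key b a t s (p - 1) (σ - p + 1) hb ha hs hst hq hη
    rw [show p - 1 + 1 = p by ring, show p - 1 + (σ - p + 1) = σ by ring,
      show b - a = -(a - b) by ring, show b * t - a * s = -(a * s - b * t) by ring,
      phi_neg, phi_neg] at h
    nlinarith [h]
end

section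
/- Let (V,E,μ) be an infinite, connected, locally finite weighted graph, 1 < p < ∞, σ > p−1, and let o ∈ V. For R ≥ 1 let g_R : V → ℝ be a local p-Green function of the ball B_R with pole at o, and set L_R = ∑_{x∈B_R} g_R(x)^σ μ(x). If u : V → ℝ is nonnegative, not identically zero, and satisfies −Δ_p u(x) ≥ u(x)^σ for all x ∈ V, then for every R ≥ 1, L_R ≤ (σ/(σ−p+1)) (g_R(o)/u(o))^{σ−p+1}. -/
/-!
Test `-Δ_p u ≥ u^σ` against `ψ = (g/u)^σ` and the equation of `g` against
`φ = (g/u)^(σ-p+1)`. After summation by parts both sides become sums over edges, which the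
two-point inequality
`(σ-p+1) Φ_p(u₂-u₁) (b^σ-a^σ) ≤ σ Φ_p(b u₂-a u₁) (b^(σ-p+1)-a^(σ-p+1))` (`a = g₁/u₁`, `b = g₂/u₂`)
compares edge by edge. The `u`-side dominates `(σ-p+1) L_R`, and the `g`-side collapses to
`σ φ(o)` since `g` is `p`-harmonic off its pole. The ratio makes sense because `u > 0` and
`g ≥ 0`, both by the strong minimum principle.
-/

open scoped BigOperators ENNReal

/-- Vertex measure `μ(x) = ∑_{y ~ x} μ_{xy}`. -/
noncomputable def vMeas {V : Type*} (G : SimpleGraph V) (w : V → V → ℝ) (x : V) : ℝ :=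
  ∑ᶠ y ∈ {y | G.Adj x y}, w x y

/-- The `p`-Laplacian `Δ_p u(x) = μ(x)⁻¹ ∑_{y ~ x} μ_{xy} Φ_p(u(y) - u(x))`. -/
noncomputable def pLap {V : Type*} (G : SimpleGraph V) (w : V → V → ℝ) (p : ℝ)
    (u : V → ℝ) (x : V) : ℝ :=
  (vMeas G w x)⁻¹ * ∑ᶠ y ∈ {y | G.Adj x y}, w x y * Phi p (u y - u x)

/-- The ball `B_R = {x : d(o,x) ≤ R}` with respect to the graph distance. -/
def ballSet {V : Type*} (G : SimpleGraph V) (o : V) (R : ℕ) : Set V :=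
  {x | G.dist o x ≤ R}

/-- `g` is a local `p`-Green function of `Ω` with pole at `y`:
`g = 0` off `Ω`, `-Δ_p g = 0` on `Ω \ {y}`, and `-Δ_p g(y) = μ(y)⁻¹`. -/
def IsGreen {V : Type*} (G : SimpleGraph V) (w : V → V → ℝ) (p : ℝ)
    (Ω : Set V) (y : V) (g : V → ℝ) : Prop :=
  (∀ x ∉ Ω, g x = 0) ∧ (∀ x ∈ Ω, x ≠ y → -pLap G w p g x = 0) ∧
    -pLap G w p g y = (vMeas G w y)⁻¹

section Phi

variable {p : ℝ}

lemma Phi_neg (p t : ℝ) : Phi p (-t) = -Phi p t := by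
  simp [Phi]

lemma Phi_sub_comm (p s t : ℝ) : Phi p (s - t) = -Phi p (t - s) := by
  rw [← Phi_neg, neg_sub]

lemma Phi_of_nonneg (hp : 1 < p) {t : ℝ} (ht : 0 ≤ t) : Phi p t = t ^ (p - 1) := by
  rcases ht.eq_or_lt with rfl | ht
  · simp [Phi, Real.zero_rpow (by linarith : p - 1 ≠ 0)]
  · rw [Phi, abs_of_pos ht, ← Real.rpow_add_one ht.ne']
    ring_nf

lemma Phi_nonneg (hp : 1 < p) {t : ℝ} (ht : 0 ≤ t) : 0 ≤ Phi p t := by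
  rw [Phi_of_nonneg hp ht]
  exact Real.rpow_nonneg ht _

lemma Phi_pos (hp : 1 < p) {t : ℝ} (ht : 0 < t) : 0 < Phi p t := by
  rw [Phi_of_nonneg hp ht.le]
  exact Real.rpow_pos_of_pos ht _

lemma Phi_monotone (hp : 1 < p) : Monotone (Phi p) := by
  have hmono : MonotoneOn (Phi p) (Set.Ici 0) := fun s hs t _ hst => by
    rw [Phi_of_nonneg hp hs, Phi_of_nonneg hp (le_trans hs hst)]
    exact Real.rpow_le_rpow hs hst (by linarith)
  intro s t hst
  rcases le_total 0 s with hs | hs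
  · exact hmono hs (le_trans hs hst) hst
  rcases le_total 0 t with ht | ht
  · linarith [Phi_nonneg hp ht, Phi_nonneg hp (neg_nonneg.2 hs), Phi_neg p s]
  · have := hmono (neg_nonneg.2 ht) (neg_nonneg.2 hs) (neg_le_neg hst)
    rw [Phi_neg, Phi_neg] at this
    linarith

lemma Phi_mul (hp : 1 < p) {r : ℝ} (hr : 0 ≤ r) (t : ℝ) :
    Phi p (r * t) = r ^ (p - 1) * Phi p t := by
  rcases hr.eq_or_lt with rfl | hr
  · simp [Phi, Real.zero_rpow (by linarith : p - 1 ≠ 0)]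
  · rw [Phi, Phi, abs_mul, abs_of_pos hr, Real.mul_rpow hr.le (abs_nonneg t),
      show p - 1 = p - 2 + 1 by ring, Real.rpow_add_one hr.ne']
    ring

end Phi

lemma rpow_add_mul_sub_le_rpow {x y q : ℝ} (hx : 0 ≤ x) (hy : 0 ≤ y) (hq : 1 ≤ q) :
    x ^ q + q * x ^ (q - 1) * (y - x) ≤ y ^ q := by
  rcases hx.eq_or_lt with rfl | hx
  · rcases hq.eq_or_lt with rfl | hq
    · simp
    · simp [Real.zero_rpow (by linarith : q ≠ 0), Real.zero_rpow (by linarith : q - 1 ≠ 0),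
        Real.rpow_nonneg hy]
  · have hxq : x ^ q = x ^ (q - 1) * x := by
      rw [← Real.rpow_add_one hx.ne']
      ring_nf
    have bernoulli := one_add_mul_self_le_rpow_one_add
      (by linarith [div_nonneg hy hx.le] : -1 ≤ y / x - 1) hq
    rw [add_sub_cancel, Real.div_rpow hy hx.le, le_div_iff₀ (Real.rpow_pos_of_pos hx q)] at bernoulli
    calc x ^ q + q * x ^ (q - 1) * (y - x) = (1 + q * (y / x - 1)) * x ^ q := by
          rw [hxq]
          field_simp
      _ ≤ y ^ q := bernoulli

lemma mul_rpow_mul_sub_le {a b β σ : ℝ} (ha : 0 ≤ a) (hb : 0 ≤ b) (hβ : 0 < β) (hβσ : β ≤ σ) :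
    σ * a ^ (σ - β) * (b ^ β - a ^ β) ≤ β * (b ^ σ - a ^ σ) := by
  have hpow : ∀ {c : ℝ}, 0 ≤ c → ∀ e, (c ^ β) ^ (e / β) = c ^ e := fun hc e => by
    rw [← Real.rpow_mul hc, mul_div_cancel₀ e hβ.ne']
  have tangent := rpow_add_mul_sub_le_rpow (Real.rpow_nonneg ha β) (Real.rpow_nonneg hb β)
    ((one_le_div hβ).2 hβσ)
  rw [hpow ha, hpow hb, show σ / β - 1 = (σ - β) / β by field_simp, hpow ha] at tangent
  have := mul_le_mul_of_nonneg_left tangent hβ.le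
  field_simp at this
  linarith

section PointwiseInequality

variable {p σ : ℝ}

lemma Phi_mul_rpow_sub_le_of_le (hp : 1 < p) (hσ : p - 1 < σ) {u₁ u₂ a b : ℝ}
    (hu₁ : 0 ≤ u₁) (hu₂ : 0 ≤ u₂) (ha : 0 ≤ a) (hab : a ≤ b) :
    (σ - p + 1) * (Phi p (u₂ - u₁) * (b ^ σ - a ^ σ)) ≤
      σ * (Phi p (b * u₂ - a * u₁) * (b ^ (σ - p + 1) - a ^ (σ - p + 1))) := by
  set β := σ - p + 1
  have hβ : 0 < β := by linarith
  have hβσ : β ≤ σ := by linarith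
  have hexp : p - 1 = σ - β := by ring
  have hb : 0 ≤ b := ha.trans hab
  have hgap : 0 ≤ b ^ β - a ^ β := sub_nonneg.2 (Real.rpow_le_rpow ha hab hβ.le)
  -- `b u₂ - a u₁ = c (u₂ - u₁) + (b - c) u₂ + (c - a) u₁` for every `c ∈ [a, b]`
  have hscale : ∀ c, 0 ≤ c → a ≤ c → c ≤ b →
      c ^ (σ - β) * Phi p (u₂ - u₁) ≤ Phi p (b * u₂ - a * u₁) := fun c hc hac hcb => by
    rw [← hexp, ← Phi_mul hp hc]
    exact Phi_monotone hp (by nlinarith)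
  rcases le_total 0 (Phi p (u₂ - u₁)) with hC | hC
  · calc β * (Phi p (u₂ - u₁) * (b ^ σ - a ^ σ))
          = Phi p (u₂ - u₁) * (β * (b ^ σ - a ^ σ)) := by ring
      _ ≤ Phi p (u₂ - u₁) * (σ * b ^ (σ - β) * (b ^ β - a ^ β)) := by
          have tangent_at_b := mul_rpow_mul_sub_le hb ha hβ hβσ
          exact mul_le_mul_of_nonneg_left (by linarith) hC
      _ = σ * (b ^ (σ - β) * Phi p (u₂ - u₁) * (b ^ β - a ^ β)) := by ring
      _ ≤ σ * (Phi p (b * u₂ - a * u₁) * (b ^ β - a ^ β)) := by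
          gcongr
          · linarith
          · exact hscale b hb hab le_rfl
  · calc β * (Phi p (u₂ - u₁) * (b ^ σ - a ^ σ))
          = Phi p (u₂ - u₁) * (β * (b ^ σ - a ^ σ)) := by ring
      _ ≤ Phi p (u₂ - u₁) * (σ * a ^ (σ - β) * (b ^ β - a ^ β)) :=
          mul_le_mul_of_nonpos_left (mul_rpow_mul_sub_le ha hb hβ hβσ) hC
      _ = σ * (a ^ (σ - β) * Phi p (u₂ - u₁) * (b ^ β - a ^ β)) := by ring
      _ ≤ σ * (Phi p (b * u₂ - a * u₁) * (b ^ β - a ^ β)) := by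
          gcongr
          · linarith
          · exact hscale a ha le_rfl hab

lemma Phi_mul_rpow_sub_le (hp : 1 < p) (hσ : p - 1 < σ) {u₁ u₂ a b : ℝ}
    (hu₁ : 0 ≤ u₁) (hu₂ : 0 ≤ u₂) (ha : 0 ≤ a) (hb : 0 ≤ b) :
    (σ - p + 1) * (Phi p (u₂ - u₁) * (b ^ σ - a ^ σ)) ≤
      σ * (Phi p (b * u₂ - a * u₁) * (b ^ (σ - p + 1) - a ^ (σ - p + 1))) := by
  rcases le_total a b with hab | hba
  · exact Phi_mul_rpow_sub_le_of_le hp hσ hu₁ hu₂ ha hab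
  · have := Phi_mul_rpow_sub_le_of_le hp hσ hu₂ hu₁ hb hba
    rw [Phi_sub_comm p u₁, Phi_sub_comm p (a * u₁)] at this
    linear_combination this

end PointwiseInequality

section Graph

variable {V : Type*} {G : SimpleGraph V} {w : V → V → ℝ} {p : ℝ}

lemma finite_ballSet (hconn : G.Connected) (hlf : ∀ x : V, {y | G.Adj x y}.Finite) (o : V) :
    ∀ R, (ballSet G o R).Finite
  | 0 => (Set.finite_singleton o).subset fun x hx => by
      simpa [eq_comm] using hconn.dist_eq_zero_iff.1 (Nat.le_zero.1 hx)
  | R + 1 => by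
      refine ((finite_ballSet hconn hlf o R).union
        ((finite_ballSet hconn hlf o R).biUnion fun y _ => hlf y)).subset fun x hx => ?_
      rcases Nat.le_or_eq_of_le_succ hx with hle | hdist
      · exact Or.inl hle
      -- the second-to-last vertex of a geodesic from `o` to `x` lies in the smaller ball
      obtain ⟨W, hW⟩ := SimpleGraph.exists_walk_of_dist_ne_zero
        (by rw [SimpleGraph.dist_comm, hdist]; omega : G.dist x o ≠ 0)
      cases W with
      | nil => simp at hdist
      | cons hadj W' =>
        refine Or.inr (Set.mem_biUnion (?_ : G.dist o _ ≤ R) hadj.symm)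
        rw [SimpleGraph.Walk.length_cons, SimpleGraph.dist_comm, hdist] at hW
        calc G.dist o _ = G.dist _ o := SimpleGraph.dist_comm
          _ ≤ W'.length := SimpleGraph.dist_le W'
          _ = R := by omega

lemma vMeas_eq_sum {x : V} (hx : {y | G.Adj x y}.Finite) :
    vMeas G w x = ∑ y ∈ hx.toFinset, w x y :=
  finsum_mem_eq_finite_toFinset_sum _ hx

lemma vMeas_mul_pLap {x : V} (hx : {y | G.Adj x y}.Finite) (hμ : vMeas G w x ≠ 0) (f : V → ℝ) :
    vMeas G w x * pLap G w p f x = ∑ y ∈ hx.toFinset, w x y * Phi p (f y - f x) := by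
  rw [pLap, ← mul_assoc, mul_inv_cancel₀ hμ, one_mul, finsum_mem_eq_finite_toFinset_sum _ hx]

lemma vMeas_pos [Infinite V] (hconn : G.Connected) (hlf : ∀ x : V, {y | G.Adj x y}.Finite)
    (hwpos : ∀ x y, G.Adj x y → 0 < w x y) (x : V) : 0 < vMeas G w x := by
  obtain ⟨y, hxy⟩ := hconn.preconnected.exists_adj_of_nontrivial x
  rw [vMeas_eq_sum (hlf x)]
  exact Finset.sum_pos (fun z hz => hwpos x z ((hlf x).mem_toFinset.1 hz))
    ⟨y, (hlf x).mem_toFinset.2 hxy⟩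

lemma eq_of_adj_of_pLap_nonpos (hp : 1 < p) {f : V → ℝ} {x y : V}
    (hx : {y | G.Adj x y}.Finite) (hwpos : ∀ y, G.Adj x y → 0 < w x y)
    (hsuper : pLap G w p f x ≤ 0) (hmin : ∀ y, G.Adj x y → f x ≤ f y) (hxy : G.Adj x y) :
    f y = f x := by
  refine le_antisymm (not_lt.1 fun hlt => hsuper.not_gt ?_) (hmin y hxy)
  have hy : y ∈ hx.toFinset := hx.mem_toFinset.2 hxy
  have hμ : 0 < vMeas G w x := by
    rw [vMeas_eq_sum hx]
    exact Finset.sum_pos (fun z hz => hwpos z (hx.mem_toFinset.1 hz)) ⟨y, hy⟩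
  rw [← mul_pos_iff_of_pos_left hμ, vMeas_mul_pLap hx hμ.ne']
  refine Finset.sum_pos' (fun z hz => ?_) ⟨y, hy, mul_pos (hwpos y hxy) (Phi_pos hp (by linarith))⟩
  have hz := hx.mem_toFinset.1 hz
  exact mul_nonneg (hwpos z hz).le (Phi_nonneg hp (by linarith [hmin z hz]))

lemma eq_of_pLap_nonpos_of_le (hconn : G.Connected) (hp : 1 < p)
    (hlf : ∀ x : V, {y | G.Adj x y}.Finite) (hwpos : ∀ x y, G.Adj x y → 0 < w x y)
    {f : V → ℝ} {m : ℝ} (hmin : ∀ x, m ≤ f x) (hsuper : ∀ x, f x = m → pLap G w p f x ≤ 0)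
    {x₀ : V} (h₀ : f x₀ = m) (x : V) : f x = m := by
  induction (SimpleGraph.reachable_iff_reflTransGen x₀ x).1 (hconn x₀ x) with
  | refl => exact h₀
  | tail _ hadj ih =>
    rw [← ih]
    exact eq_of_adj_of_pLap_nonpos hp (hlf _) (hwpos _) (hsuper _ ih)
      (fun y _ => ih ▸ hmin y) hadj

lemma pos_of_pLap_nonpos (hconn : G.Connected) (hp : 1 < p)
    (hlf : ∀ x : V, {y | G.Adj x y}.Finite) (hwpos : ∀ x y, G.Adj x y → 0 < w x y)
    {u : V → ℝ} (hu0 : ∀ x, 0 ≤ u x) (hune : u ≠ 0) (hsuper : ∀ x, pLap G w p u x ≤ 0)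
    (x : V) : 0 < u x := by
  refine (hu0 x).lt_of_ne fun hx => hune (funext fun z => ?_)
  exact eq_of_pLap_nonpos_of_le hconn hp hlf hwpos hu0 (fun y _ => hsuper y) hx.symm z

lemma IsGreen.nonneg [Infinite V] (hconn : G.Connected) (hp : 1 < p)
    (hlf : ∀ x : V, {y | G.Adj x y}.Finite) (hwpos : ∀ x y, G.Adj x y → 0 < w x y)
    {Ω : Set V} (hΩ : Ω.Finite) {y : V} {g : V → ℝ} (hg : IsGreen G w p Ω y g) (x : V) :
    0 ≤ g x := by
  by_contra! hx
  have hxΩ : x ∈ Ω := by_contra fun h => by linarith [hg.1 x h]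
  obtain ⟨b, hbΩ, hbmin⟩ := Set.exists_min_image Ω g hΩ ⟨x, hxΩ⟩
  have hgb : g b < 0 := (hbmin x hxΩ).trans_lt hx
  have hmin : ∀ z, g b ≤ g z := fun z => by
    by_cases hz : z ∈ Ω
    · exact hbmin z hz
    · linarith [hg.1 z hz]
  have hsuper : ∀ z, g z = g b → pLap G w p g z ≤ 0 := fun z hz => by
    have hzΩ : z ∈ Ω := by_contra fun h => by linarith [hg.1 z h]
    by_cases hzy : z = y
    · subst hzy
      linarith [hg.2.2, inv_pos.2 (vMeas_pos hconn hlf hwpos z)]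
    · linarith [hg.2.1 z hzΩ hzy]
  obtain ⟨z, hz⟩ := hΩ.infinite_compl.nonempty
  linarith [hg.1 z hz, eq_of_pLap_nonpos_of_le hconn hp hlf hwpos hmin hsuper rfl z]

lemma two_mul_sum_mul_neg_pLap [DecidableRel G.Adj] (hwsymm : ∀ x y, w x y = w y x)
    (hlf : ∀ x : V, {y | G.Adj x y}.Finite) (hμ : ∀ x, vMeas G w x ≠ 0) {T : Finset V}
    {θ : V → ℝ} (hT : ∀ x, θ x ≠ 0 → ∀ y, G.Adj x y → y ∈ T) (f : V → ℝ) :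
    2 * ∑ x ∈ T, θ x * (vMeas G w x * -pLap G w p f x) =
      ∑ x ∈ T, ∑ y ∈ T with G.Adj x y, w x y * Phi p (f y - f x) * (θ y - θ x) := by
  have hlocal : ∀ x ∈ T, θ x * (vMeas G w x * -pLap G w p f x) =
      -∑ y ∈ T with G.Adj x y, w x y * Phi p (f y - f x) * θ x := fun x _ => by
    by_cases hθ : θ x = 0
    · simp [hθ]
    have hnbhd : {y ∈ T | G.Adj x y} = (hlf x).toFinset := by
      ext y
      simpa using hT x hθ y
    rw [hnbhd, ← Finset.sum_mul, ← vMeas_mul_pLap (hlf x) (hμ x)]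
    ring
  have hswap : ∑ x ∈ T, ∑ y ∈ T with G.Adj x y, w x y * Phi p (f y - f x) * θ y =
      -∑ x ∈ T, ∑ y ∈ T with G.Adj x y, w x y * Phi p (f y - f x) * θ x := by
    rw [Finset.sum_comm' (t' := T) (s' := fun y => {x ∈ T | G.Adj y x})
      (fun x y => by simp only [Finset.mem_filter, G.adj_comm x y]; tauto)]
    simp only [← Finset.sum_neg_distrib]
    refine Finset.sum_congr rfl fun y _ => Finset.sum_congr rfl fun x _ => ?_
    rw [hwsymm, Phi_sub_comm]
    ring
  rw [Finset.sum_congr rfl hlocal, Finset.sum_neg_distrib]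
  simp only [mul_sub, Finset.sum_sub_distrib]
  linarith

lemma exists_finset_forall_adj_mem (hlf : ∀ x : V, {y | G.Adj x y}.Finite) {Ω : Set V}
    (hΩ : Ω.Finite) : ∃ T : Finset V, ∀ x ∈ Ω, x ∈ T ∧ ∀ y, G.Adj x y → y ∈ T := by
  classical
  refine ⟨hΩ.toFinset ∪ hΩ.toFinset.biUnion fun x => (hlf x).toFinset, fun x hx => ?_⟩
  simp only [Finset.mem_union, Finset.mem_biUnion, Set.Finite.mem_toFinset]
  exact ⟨Or.inl hx, fun y hxy => Or.inr ⟨x, hx, hxy⟩⟩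

lemma IsGreen.sum_mul_vMeas_mul_neg_pLap {Ω : Set V} {y : V} {g θ : V → ℝ}
    (hg : IsGreen G w p Ω y g) (hμ : vMeas G w y ≠ 0) (hθ : ∀ x ∉ Ω, θ x = 0) {T : Finset V}
    (hyT : y ∈ T) : ∑ x ∈ T, θ x * (vMeas G w x * -pLap G w p g x) = θ y := by
  rw [Finset.sum_eq_single_of_mem y hyT, hg.2.2, mul_inv_cancel₀ hμ, mul_one]
  intro x _ hxy
  by_cases hx : x ∈ Ω
  · rw [hg.2.1 x hx hxy, mul_zero, mul_zero]
  · rw [hθ x hx, zero_mul]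

lemma sum_sum_Phi_mul_rpow_sub_le [DecidableRel G.Adj] {σ : ℝ} (hp : 1 < p) (hσ : p - 1 < σ)
    (hwpos : ∀ x y, G.Adj x y → 0 < w x y) (T : Finset V) {u r : V → ℝ} (hu : ∀ x, 0 ≤ u x)
    (hr : ∀ x, 0 ≤ r x) :
    (σ - p + 1) * ∑ x ∈ T, ∑ y ∈ T with G.Adj x y,
        w x y * Phi p (u y - u x) * (r y ^ σ - r x ^ σ) ≤
      σ * ∑ x ∈ T, ∑ y ∈ T with G.Adj x y,
        w x y * Phi p (r y * u y - r x * u x) * (r y ^ (σ - p + 1) - r x ^ (σ - p + 1)) := by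
  simp only [Finset.mul_sum]
  refine Finset.sum_le_sum fun x _ => Finset.sum_le_sum fun y hy => ?_
  have hedge := mul_le_mul_of_nonneg_left
    (Phi_mul_rpow_sub_le hp hσ (hu x) (hu y) (hr x) (hr y))
    (hwpos x y (Finset.mem_filter.1 hy).2).le
  linear_combination hedge

end Graph

lemma IsGreen.finsum_rpow_mul_vMeas_le {V : Type*} [Infinite V] {G : SimpleGraph V}
    (hconn : G.Connected) (hlf : ∀ x : V, {y | G.Adj x y}.Finite) {w : V → V → ℝ}
    (hwsymm : ∀ x y, w x y = w y x) (hwpos : ∀ x y, G.Adj x y → 0 < w x y) {p σ : ℝ}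
    (hp : 1 < p) (hσ : p - 1 < σ) {Ω : Set V} (hΩ : Ω.Finite) {o : V} (ho : o ∈ Ω)
    {g : V → ℝ} (hg : IsGreen G w p Ω o g) {u : V → ℝ} (hu0 : ∀ x, 0 ≤ u x) (hune : u ≠ 0)
    (hsol : ∀ x, u x ^ σ ≤ -pLap G w p u x) :
    ∑ᶠ x ∈ Ω, g x ^ σ * vMeas G w x ≤ σ / (σ - p + 1) * (g o / u o) ^ (σ - p + 1) := by
  classical
  have hβ : 0 < σ - p + 1 := by linarith
  have hμ := vMeas_pos hconn hlf hwpos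
  have hu := pos_of_pLap_nonpos hconn hp hlf hwpos hu0 hune fun x => by
    linarith [hsol x, Real.rpow_nonneg (hu0 x) σ]
  set r : V → ℝ := fun x => g x / u x
  have hr0 : ∀ x, 0 ≤ r x := fun x => div_nonneg (hg.nonneg hconn hp hlf hwpos hΩ x) (hu x).le
  have hgr : ∀ x, g x = r x * u x := fun x => (div_mul_cancel₀ (g x) (hu x).ne').symm
  have hr_out : ∀ e : ℝ, 0 < e → ∀ x ∉ Ω, r x ^ e = 0 := fun e he x hx => by
    simp [r, hg.1 x hx, he.ne']
  obtain ⟨T, hT⟩ := exists_finset_forall_adj_mem hlf hΩ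
  have hsupp : ∀ e : ℝ, 0 < e → ∀ x, r x ^ e ≠ 0 → ∀ y, G.Adj x y → y ∈ T :=
    fun e he x hx => (hT x (by_contra fun h => hx (hr_out e he x h))).2
  have green := fun e he => two_mul_sum_mul_neg_pLap (p := p) hwsymm hlf (fun x => (hμ x).ne')
    (hsupp e he)
  have hL : ∑ᶠ x ∈ Ω, g x ^ σ * vMeas G w x = ∑ x ∈ T, r x ^ σ * (vMeas G w x * u x ^ σ) := by
    rw [finsum_mem_eq_finite_toFinset_sum _ hΩ]
    refine Finset.sum_subset (fun x hx => (hT x (hΩ.mem_toFinset.1 hx)).1) (fun x _ hx => ?_)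
      |>.trans (Finset.sum_congr rfl fun x _ => ?_)
    · simp [hg.1 x (by simpa using hx), (by linarith : σ ≠ 0)]
    · rw [hgr x, Real.mul_rpow (hr0 x) (hu x).le]
      ring
  have hsol_sum : ∑ x ∈ T, r x ^ σ * (vMeas G w x * u x ^ σ) ≤
      ∑ x ∈ T, r x ^ σ * (vMeas G w x * -pLap G w p u x) :=
    Finset.sum_le_sum fun x _ => mul_le_mul_of_nonneg_left
      (mul_le_mul_of_nonneg_left (hsol x) (hμ x).le) (Real.rpow_nonneg (hr0 x) σ)
  have hpole := hg.sum_mul_vMeas_mul_neg_pLap (hμ o).ne' (hr_out _ hβ) (hT o ho).1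
  have henergy := sum_sum_Phi_mul_rpow_sub_le hp hσ hwpos T (fun x => (hu x).le) hr0
  simp only [← hgr] at henergy
  rw [← green σ (by linarith), ← green _ hβ, hpole] at henergy
  rw [div_mul_eq_mul_div, le_div_iff₀ hβ, hL]
  linarith [mul_le_mul_of_nonneg_left hsol_sum hβ.le]

theorem stmt4_general {V : Type*} [Infinite V] (G : SimpleGraph V)
    (hconn : G.Connected) (hlf : ∀ x : V, {y | G.Adj x y}.Finite)
    (w : V → V → ℝ) (hwsymm : ∀ x y, w x y = w y x)
    (hwpos : ∀ x y, G.Adj x y → 0 < w x y)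
    (p σ : ℝ) (hp : 1 < p) (hσ : p - 1 < σ) (o : V)
    (R : ℕ) (g : V → ℝ) (hg : IsGreen G w p (ballSet G o R) o g)
    (u : V → ℝ) (hu0 : ∀ x, 0 ≤ u x) (hune : u ≠ 0)
    (hsol : ∀ x, (u x) ^ σ ≤ -pLap G w p u x) :
    (∑ᶠ x ∈ ballSet G o R, (g x) ^ σ * vMeas G w x) ≤
      (σ / (σ - p + 1)) * (g o / u o) ^ (σ - p + 1) :=
  hg.finsum_rpow_mul_vMeas_le hconn hlf hwsymm hwpos hp hσ (finite_ballSet hconn hlf o R)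
    (by simp [ballSet]) hu0 hune hsol

/-- If `u ≥ 0` is a nontrivial solution of `-Δ_p u ≥ u^σ`, then for every `R ≥ 1`,
`L_R = ∑_{x ∈ B_R} g_R(x)^σ μ(x) ≤ (σ/(σ-p+1)) (g_R(o)/u(o))^{σ-p+1}`. -/
theorem stmt4 {V : Type*} [Infinite V] (G : SimpleGraph V)
    (hconn : G.Connected) (hlf : ∀ x : V, {y | G.Adj x y}.Finite)
    (w : V → V → ℝ) (hwsymm : ∀ x y, w x y = w y x)
    (hwpos : ∀ x y, G.Adj x y → 0 < w x y)
    (p σ : ℝ) (hp : 1 < p) (hσ : p - 1 < σ) (o : V)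
    (R : ℕ) (hR : 1 ≤ R) (g : V → ℝ) (hg : IsGreen G w p (ballSet G o R) o g)
    (u : V → ℝ) (hu0 : ∀ x, 0 ≤ u x) (hune : u ≠ 0)
    (hsol : ∀ x, (u x) ^ σ ≤ -pLap G w p u x) :
    (∑ᶠ x ∈ ballSet G o R, (g x) ^ σ * vMeas G w x) ≤
      (σ / (σ - p + 1)) * (g o / u o) ^ (σ - p + 1) :=
  stmt4_general G hconn hlf w hwsymm hwpos p σ hp hσ o R g hg u hu0 hune hsol
end

section
/- Let r > 0, let m ≥ 1, let a_1, …, a_m > 0 be real numbers, and set A_j = ∑_{i=1}^{j} a_i. Then ∑_{i=1}^{m} a_i^{−r} ≥ 2^{−(r+1)} ∑_{j=1}^{m} (j/A_j)^r. -/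
/-!
Hölder's inequality gives `k ^ (1 + r) ≤ (∑ a_i ^ (-r)) (∑ a_i) ^ r` for any `k` positive reals `a_i`.
Applied to the upper half `j/2 < i ≤ j`, whose sum is at most `A_j`, it bounds `(j / A_j) ^ r` by
`2 ^ (r + 1) / j` times the sum of `a_i ^ (-r)` over that half. Summing over `j`, each `a_i ^ (-r)`
is counted with weight `∑_{i ≤ j < 2i} 1/j ≤ 1`.
-/

open Finset

lemma card_rpow_le_sum_rpow_neg_mul_sum_rpow {ι : Type*} (s : Finset ι) {a : ι → ℝ} {r : ℝ}
    (hr : 0 < r) (ha : ∀ i ∈ s, 0 < a i) :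
    (#s : ℝ) ^ (1 + r) ≤ (∑ i ∈ s, a i ^ (-r)) * (∑ i ∈ s, a i) ^ r := by
  have hp : (0 : ℝ) < 1 + r := by linarith
  have hpq : (1 + r).HolderConjugate ((1 + r) / r) := by
    rw [Real.holderConjugate_iff]
    exact ⟨by linarith, by field_simp⟩
  have holder := Real.inner_le_Lp_mul_Lq_of_nonneg s hpq
    (f := fun i ↦ a i ^ (-r / (1 + r))) (g := fun i ↦ a i ^ (r / (1 + r)))
    (fun i hi ↦ (Real.rpow_pos_of_pos (ha i hi) _).le)
    (fun i hi ↦ (Real.rpow_pos_of_pos (ha i hi) _).le)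
  have h_inner : ∑ i ∈ s, a i ^ (-r / (1 + r)) * a i ^ (r / (1 + r)) = #s := by
    rw [sum_congr rfl fun i hi ↦ by
      rw [← Real.rpow_add (ha i hi), neg_div, neg_add_cancel, Real.rpow_zero]]
    simp
  have h_left : ∑ i ∈ s, (a i ^ (-r / (1 + r))) ^ (1 + r) = ∑ i ∈ s, a i ^ (-r) :=
    sum_congr rfl fun i hi ↦ by
      rw [← Real.rpow_mul (ha i hi).le, div_mul_cancel₀ _ hp.ne']
  have h_right : ∑ i ∈ s, (a i ^ (r / (1 + r))) ^ ((1 + r) / r) = ∑ i ∈ s, a i :=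
    sum_congr rfl fun i hi ↦ by
      rw [← Real.rpow_mul (ha i hi).le, show r / (1 + r) * ((1 + r) / r) = 1 by field_simp,
        Real.rpow_one]
  rw [h_inner, h_left, h_right, one_div_div] at holder
  have hP : 0 ≤ ∑ i ∈ s, a i ^ (-r) := sum_nonneg fun i hi ↦ (Real.rpow_pos_of_pos (ha i hi) _).le
  have hQ : 0 ≤ ∑ i ∈ s, a i := sum_nonneg fun i hi ↦ (ha i hi).le
  calc (#s : ℝ) ^ (1 + r)
      ≤ ((∑ i ∈ s, a i ^ (-r)) ^ (1 / (1 + r)) * (∑ i ∈ s, a i) ^ (r / (1 + r))) ^ (1 + r) := by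
        gcongr
    _ = (∑ i ∈ s, a i ^ (-r)) * (∑ i ∈ s, a i) ^ r := by
        rw [Real.mul_rpow (by positivity) (by positivity), ← Real.rpow_mul hP, ← Real.rpow_mul hQ,
          one_div_mul_cancel hp.ne', div_mul_cancel₀ _ hp.ne', Real.rpow_one]

lemma rpow_div_sum_Icc_le {a : ℕ → ℝ} {r : ℝ} (hr : 0 < r) {j : ℕ} (hj : 1 ≤ j)
    (ha : ∀ i ∈ Icc 1 j, 0 < a i) :
    ((j : ℝ) / ∑ i ∈ Icc 1 j, a i) ^ r ≤
      2 ^ (r + 1) * ((j : ℝ)⁻¹ * ∑ i ∈ Icc (j / 2 + 1) j, a i ^ (-r)) := by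
  set A := ∑ i ∈ Icc 1 j, a i
  set P := ∑ i ∈ Icc (j / 2 + 1) j, a i ^ (-r)
  have h_sub : Icc (j / 2 + 1) j ⊆ Icc 1 j := Icc_subset_Icc (by omega) le_rfl
  have hA : 0 < A := sum_pos ha (nonempty_Icc.mpr hj)
  have hj₀ : (0 : ℝ) < j := by exact_mod_cast hj
  have h_card : (j : ℝ) ≤ 2 * #(Icc (j / 2 + 1) j) := by
    rw [Nat.card_Icc]
    exact_mod_cast (by omega : j ≤ 2 * (j + 1 - (j / 2 + 1)))
  have h_half : ∑ i ∈ Icc (j / 2 + 1) j, a i ≤ A :=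
    sum_le_sum_of_subset_of_nonneg h_sub fun i hi _ ↦ (ha i hi).le
  have h_holder := card_rpow_le_sum_rpow_neg_mul_sum_rpow (Icc (j / 2 + 1) j) hr
    fun i hi ↦ ha i (h_sub hi)
  have hP : 0 ≤ P := sum_nonneg fun i hi ↦ (Real.rpow_pos_of_pos (ha i (h_sub hi)) _).le
  have hQ : 0 ≤ ∑ i ∈ Icc (j / 2 + 1) j, a i := sum_nonneg fun i hi ↦ (ha i (h_sub hi)).le
  have key : (j : ℝ) ^ (r + 1) ≤ 2 ^ (r + 1) * P * A ^ r :=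
    calc (j : ℝ) ^ (r + 1)
        ≤ (2 * #(Icc (j / 2 + 1) j) : ℝ) ^ (r + 1) := by gcongr
      _ = 2 ^ (r + 1) * (#(Icc (j / 2 + 1) j) : ℝ) ^ (1 + r) := by
        rw [Real.mul_rpow (by norm_num) (by positivity), add_comm r]
      _ ≤ 2 ^ (r + 1) * (P * A ^ r) := by
        gcongr
        exact h_holder.trans (by gcongr)
      _ = 2 ^ (r + 1) * P * A ^ r := by ring
  calc ((j : ℝ) / A) ^ r = (j : ℝ) ^ (r + 1) * ((j : ℝ)⁻¹ * (A ^ r)⁻¹) := by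
        rw [Real.div_rpow hj₀.le hA.le, Real.rpow_add hj₀, Real.rpow_one]
        field_simp
    _ ≤ 2 ^ (r + 1) * P * A ^ r * ((j : ℝ)⁻¹ * (A ^ r)⁻¹) := by gcongr
    _ = 2 ^ (r + 1) * ((j : ℝ)⁻¹ * P) := by field_simp

lemma sum_Icc_inv_le_one {i n : ℕ} (hi : 1 ≤ i) (hn : n < 2 * i) :
    ∑ j ∈ Icc i n, (j : ℝ)⁻¹ ≤ 1 := by
  have hi₀ : (0 : ℝ) < i := by exact_mod_cast hi
  calc ∑ j ∈ Icc i n, (j : ℝ)⁻¹ ≤ #(Icc i n) • (i : ℝ)⁻¹ :=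
        sum_le_card_nsmul _ _ _ fun j hj ↦ by
          gcongr
          exact_mod_cast (mem_Icc.mp hj).1
    _ ≤ (i : ℝ) * (i : ℝ)⁻¹ := by
        rw [nsmul_eq_mul, Nat.card_Icc]
        gcongr
        exact_mod_cast (by omega : n + 1 - i ≤ i)
    _ = 1 := mul_inv_cancel₀ hi₀.ne'

lemma sum_Icc_inv_mul_sum_upper_half_le {f : ℕ → ℝ} (m : ℕ) (hf : ∀ i ∈ Icc 1 m, 0 ≤ f i) :
    ∑ j ∈ Icc 1 m, (j : ℝ)⁻¹ * ∑ i ∈ Icc (j / 2 + 1) j, f i ≤ ∑ i ∈ Icc 1 m, f i :=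
  calc ∑ j ∈ Icc 1 m, (j : ℝ)⁻¹ * ∑ i ∈ Icc (j / 2 + 1) j, f i
      = ∑ j ∈ Icc 1 m, ∑ i ∈ Icc (j / 2 + 1) j, (j : ℝ)⁻¹ * f i := by simp_rw [mul_sum]
    _ = ∑ i ∈ Icc 1 m, ∑ j ∈ Icc i (min (2 * i - 1) m), (j : ℝ)⁻¹ * f i :=
        sum_comm' fun j i ↦ by simp only [mem_Icc, le_min_iff]; omega
    _ = ∑ i ∈ Icc 1 m, (∑ j ∈ Icc i (min (2 * i - 1) m), (j : ℝ)⁻¹) * f i := by simp_rw [sum_mul]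
    _ ≤ ∑ i ∈ Icc 1 m, f i := sum_le_sum fun i hi ↦ by
        have hi₁ := (mem_Icc.mp hi).1
        exact mul_le_of_le_one_left (hf i hi) (sum_Icc_inv_le_one hi₁ (by omega))

theorem stmt5_general (r : ℝ) (hr : 0 < r) (m : ℕ) (a : ℕ → ℝ)
    (hpos : ∀ i, 1 ≤ i → i ≤ m → 0 < a i) :
    (2 : ℝ) ^ (-(r + 1)) *
        ∑ j ∈ Finset.Icc 1 m, ((j : ℝ) / ∑ i ∈ Finset.Icc 1 j, a i) ^ r ≤
      ∑ i ∈ Finset.Icc 1 m, (a i) ^ (-r) := by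
  rw [Real.rpow_neg (by norm_num), inv_mul_le_iff₀ (by positivity)]
  calc ∑ j ∈ Icc 1 m, ((j : ℝ) / ∑ i ∈ Icc 1 j, a i) ^ r
      ≤ ∑ j ∈ Icc 1 m, 2 ^ (r + 1) * ((j : ℝ)⁻¹ * ∑ i ∈ Icc (j / 2 + 1) j, a i ^ (-r)) :=
        sum_le_sum fun j hj ↦ rpow_div_sum_Icc_le hr (mem_Icc.mp hj).1 fun i hi ↦
          hpos i (mem_Icc.mp hi).1 ((mem_Icc.mp hi).2.trans (mem_Icc.mp hj).2)
    _ ≤ 2 ^ (r + 1) * ∑ i ∈ Icc 1 m, a i ^ (-r) := by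
        rw [← mul_sum]
        refine mul_le_mul_of_nonneg_left (sum_Icc_inv_mul_sum_upper_half_le m fun i hi ↦ ?_)
          (by positivity)
        exact (Real.rpow_pos_of_pos (hpos i (mem_Icc.mp hi).1 (mem_Icc.mp hi).2) _).le

/-- Hardy inequality: for `r > 0` and positive `a_1, …, a_m` with partial sums
`A_j = a_1 + ⋯ + a_j`, `∑_{i=1}^m a_i^{-r} ≥ 2^{-(r+1)} ∑_{j=1}^m (j/A_j)^r`. -/
theorem stmt5 (r : ℝ) (hr : 0 < r) (m : ℕ) (hm : 1 ≤ m) (a : ℕ → ℝ)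
    (hpos : ∀ i, 1 ≤ i → i ≤ m → 0 < a i) :
    (2 : ℝ) ^ (-(r + 1)) *
        ∑ j ∈ Finset.Icc 1 m, ((j : ℝ) / ∑ i ∈ Finset.Icc 1 j, a i) ^ r ≤
      ∑ i ∈ Finset.Icc 1 m, (a i) ^ (-r) :=
  stmt5_general r hr m a hpos
end

section
/- Let 1 < p < ∞, σ > p−1, and set r = p−1, η = σ−p+1, and c_{p,σ} = 2^{−p}((σ−p+1)/(p−1))^{p−1}. Let m ≥ 1 and let V_0 > V_1 > ⋯ > V_m be real numbers with V_i > 0 for 0 ≤ i ≤ m−1 and V_m ≥ 0, and set δ_i = V_i − V_{i+1}. Then ∑_{i=0}^{m−1} V_i^σ / δ_i^r ≥ c_{p,σ} ∑_{j=1}^{m−1} j^r V_j^η. -/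
/-!
Write `X_i = V_i^σ / δ_i^r` and `a = η / r`. On the window `⌊j/2⌋ ≤ i < j`, of length
`k ≥ j/2`, Hölder's inequality gives `k^p ≤ (∑ X_i) (∑ X_i^{-1/r})^r`. Since
`X_i^{-1/r} = δ_i V_i^{-(a+1)}` and `t ↦ t^{-a}` is convex (Bernoulli's inequality), this
sum is at most `(1/a) ∑ (V_{i+1}^{-a} - V_i^{-a}) ≤ V_j^{-a} / a`, whence
`c_{p,σ} j^r V_j^η ≤ (1/j) ∑_{window} X_i`. Summing over `j` loses nothing: `i` lies only in
the windows with `i < j ≤ 2i + 1`, at most `i + 1` of them, each weighted by `1/j ≤ 1/(i+1)`.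
-/

open Finset Real

theorem mul_sub_mul_rpow_neg_le_sub {x y a : ℝ} (hy : 0 < y) (hyx : y < x) (ha : 0 < a) :
    a * (x - y) * x ^ (-(a + 1)) ≤ y ^ (-a) - x ^ (-a) := by
  have hx : 0 < x := hy.trans hyx
  have hbern := one_add_mul_self_le_rpow_one_add (s := x / y - 1) (p := a + 1)
    (by linarith [div_pos hx hy]) (by linarith)
  rw [add_sub_cancel, div_rpow hx.le hy.le, rpow_add hx, rpow_add hy, rpow_one, rpow_one,
    le_div_iff₀ (by positivity)] at hbern
  have hexpand : (1 + (a + 1) * (x / y - 1)) * (y ^ a * y) = (x + a * (x - y)) * y ^ a := by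
    field_simp
    ring
  rw [rpow_neg hx.le, rpow_neg hy.le, rpow_neg hx.le, rpow_add hx, rpow_one]
  have hxa := rpow_pos_of_pos hx a
  have hya := rpow_pos_of_pos hy a
  field_simp
  linarith

theorem mul_sum_Ico_sub_mul_rpow_neg_le {V : ℕ → ℝ} {l n : ℕ} {a : ℝ} (ha : 0 < a) (hln : l ≤ n)
    (hV : ∀ i ∈ Ico l n, 0 < V (i + 1) ∧ V (i + 1) < V i) :
    a * ∑ i ∈ Ico l n, (V i - V (i + 1)) * V i ^ (-(a + 1)) ≤ V n ^ (-a) - V l ^ (-a) := by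
  rw [mul_sum, ← sum_Ico_sub (fun i ↦ V i ^ (-a)) hln]
  gcongr with i hi
  rw [← mul_assoc]
  exact mul_sub_mul_rpow_neg_le_sub (hV i hi).1 (hV i hi).2 ha

theorem card_rpow_le_sum_rpow_mul_sum_rpow_one_sub {ι : Type*} {s : Finset ι} {g : ι → ℝ}
    {p : ℝ} (hp : 1 ≤ p) (hg : ∀ i ∈ s, 0 < g i) :
    (#s : ℝ) ^ p ≤ (∑ i ∈ s, g i) ^ (p - 1) * ∑ i ∈ s, g i ^ (1 - p) := by
  have hholder := inner_le_weight_mul_Lp_of_nonneg s hp (fun i ↦ |g i|) (fun i ↦ |g i|⁻¹)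
    (fun i ↦ abs_nonneg _) (fun i ↦ inv_nonneg.2 (abs_nonneg _))
  have hcard : ∑ i ∈ s, |g i| * |g i|⁻¹ = #s := by
    rw [sum_congr rfl fun i hi ↦ mul_inv_cancel₀ (abs_pos.2 (hg i hi).ne').ne', sum_const,
      nsmul_one]
  have hsum : ∑ i ∈ s, |g i| = ∑ i ∈ s, g i := sum_congr rfl fun i hi ↦ abs_of_pos (hg i hi)
  have hsum_rpow : ∑ i ∈ s, |g i| * |g i|⁻¹ ^ p = ∑ i ∈ s, g i ^ (1 - p) := by
    refine sum_congr rfl fun i hi ↦ ?_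
    rw [abs_of_pos (hg i hi), inv_rpow (hg i hi).le, ← rpow_neg (hg i hi).le, sub_eq_add_neg,
      rpow_add (hg i hi), rpow_one]
  rw [hcard, hsum, hsum_rpow] at hholder
  have h0 : 0 ≤ ∑ i ∈ s, g i := sum_nonneg fun i hi ↦ (hg i hi).le
  have h1 : 0 ≤ ∑ i ∈ s, g i ^ (1 - p) := sum_nonneg fun i hi ↦ (rpow_pos_of_pos (hg i hi) _).le
  have hp0 : 0 < p := by linarith
  calc (#s : ℝ) ^ p
      ≤ ((∑ i ∈ s, g i) ^ (1 - p⁻¹) * (∑ i ∈ s, g i ^ (1 - p)) ^ p⁻¹) ^ p := by gcongr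
    _ = (∑ i ∈ s, g i) ^ (p - 1) * ∑ i ∈ s, g i ^ (1 - p) := by
      rw [mul_rpow (by positivity) (by positivity), ← rpow_mul h0, ← rpow_mul h1,
        inv_mul_cancel₀ hp0.ne', rpow_one]
      congr 2
      field_simp

theorem natCast_sub_rpow_mul_le_sum_Ico {V : ℕ → ℝ} {l n : ℕ} {p σ : ℝ} (hp : 1 < p)
    (hσ : p - 1 < σ) (hln : l ≤ n) (hV : ∀ i ∈ Ico l n, 0 < V (i + 1) ∧ V (i + 1) < V i)
    (hVn : 0 < V n) :
    ((n - l : ℕ) : ℝ) ^ p * ((σ - p + 1) / (p - 1)) ^ (p - 1) * V n ^ (σ - p + 1) ≤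
      ∑ i ∈ Ico l n, V i ^ σ / (V i - V (i + 1)) ^ (p - 1) := by
  have hr : 0 < p - 1 := by linarith
  set a := (σ - p + 1) / (p - 1) with ha_def
  have ha : 0 < a := div_pos (by linarith) hr
  have hδ : ∀ i ∈ Ico l n, 0 < V i - V (i + 1) := fun i hi ↦ sub_pos.2 (hV i hi).2
  have hVi : ∀ i ∈ Ico l n, 0 < V i := fun i hi ↦ (hV i hi).1.trans (hV i hi).2
  set g : ℕ → ℝ := fun i ↦ (V i - V (i + 1)) * V i ^ (-(a + 1))
  have hg : ∀ i ∈ Ico l n, 0 < g i := fun i hi ↦ mul_pos (hδ i hi) (rpow_pos_of_pos (hVi i hi) _)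
  have hg_rpow : ∀ i ∈ Ico l n, g i ^ (1 - p) = V i ^ σ / (V i - V (i + 1)) ^ (p - 1) := by
    intro i hi
    rw [mul_rpow (hδ i hi).le (rpow_pos_of_pos (hVi i hi) _).le, ← rpow_mul (hVi i hi).le,
      show -(a + 1) * (1 - p) = σ by rw [ha_def]; field_simp; ring,
      show 1 - p = -(p - 1) by ring, rpow_neg (hδ i hi).le, div_eq_mul_inv, mul_comm]
  have hholder := card_rpow_le_sum_rpow_mul_sum_rpow_one_sub hp.le hg
  rw [Nat.card_Ico, sum_congr rfl hg_rpow] at hholder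
  have hVl : 0 < V l := by
    rcases hln.eq_or_lt with rfl | hlt
    exacts [hVn, hVi l (left_mem_Ico.2 hlt)]
  have htele : ∑ i ∈ Ico l n, g i ≤ V n ^ (-a) / a := by
    rw [le_div_iff₀ ha, mul_comm]
    exact (mul_sum_Ico_sub_mul_rpow_neg_le ha hln hV).trans
      (sub_le_self _ (rpow_nonneg hVl.le _))
  have hcancel : (V n ^ (-a) / a) ^ (p - 1) * a ^ (p - 1) * V n ^ (σ - p + 1) = 1 := by
    rw [← mul_rpow (by positivity) ha.le, div_mul_cancel₀ _ ha.ne', ← rpow_mul hVn.le,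
      ← rpow_add hVn, show -a * (p - 1) + (σ - p + 1) = 0 by rw [ha_def]; field_simp; ring,
      rpow_zero]
  have hsum_g : 0 ≤ ∑ i ∈ Ico l n, g i := sum_nonneg fun i hi ↦ (hg i hi).le
  have hsum : 0 ≤ ∑ i ∈ Ico l n, V i ^ σ / (V i - V (i + 1)) ^ (p - 1) :=
    sum_nonneg fun i hi ↦ hg_rpow i hi ▸ rpow_nonneg (hg i hi).le _
  calc ((n - l : ℕ) : ℝ) ^ p * a ^ (p - 1) * V n ^ (σ - p + 1)
      ≤ (V n ^ (-a) / a) ^ (p - 1) * (∑ i ∈ Ico l n, V i ^ σ / (V i - V (i + 1)) ^ (p - 1)) *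
          a ^ (p - 1) * V n ^ (σ - p + 1) := by
        gcongr
        exact hholder.trans (by gcongr)
    _ = ∑ i ∈ Ico l n, V i ^ σ / (V i - V (i + 1)) ^ (p - 1) := by
        linear_combination (∑ i ∈ Ico l n, V i ^ σ / (V i - V (i + 1)) ^ (p - 1)) * hcancel

theorem rpow_mul_le_sum_Ico_half_div {V : ℕ → ℝ} {j : ℕ} {p σ : ℝ} (hp : 1 < p)
    (hσ : p - 1 < σ) (hj : 0 < j) (hV : ∀ i ∈ Ico (j / 2) j, 0 < V (i + 1) ∧ V (i + 1) < V i) :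
    2 ^ (-p) * ((σ - p + 1) / (p - 1)) ^ (p - 1) * ((j : ℝ) ^ (p - 1) * V j ^ (σ - p + 1)) ≤
      (∑ i ∈ Ico (j / 2) j, V i ^ σ / (V i - V (i + 1)) ^ (p - 1)) / j := by
  have hVj : 0 < V j := by
    simpa [Nat.sub_add_cancel hj] using (hV (j - 1) (by simp; omega)).1
  have hhalf : (j : ℝ) / 2 ≤ ((j - j / 2 : ℕ) : ℝ) := by
    rw [Nat.cast_sub (Nat.div_le_self j 2)]
    linarith [Nat.cast_div_le (α := ℝ) (m := j) (n := 2)]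
  have hjR : (0 : ℝ) < j := by exact_mod_cast hj
  rw [le_div_iff₀ hjR]
  calc 2 ^ (-p) * ((σ - p + 1) / (p - 1)) ^ (p - 1) * ((j : ℝ) ^ (p - 1) * V j ^ (σ - p + 1)) * j
      = ((j : ℝ) / 2) ^ p * ((σ - p + 1) / (p - 1)) ^ (p - 1) * V j ^ (σ - p + 1) := by
        rw [div_rpow hjR.le zero_le_two, rpow_neg zero_le_two, rpow_sub_one hjR.ne']
        field_simp
    _ ≤ ((j - j / 2 : ℕ) : ℝ) ^ p * ((σ - p + 1) / (p - 1)) ^ (p - 1) * V j ^ (σ - p + 1) := by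
        have : 0 < σ - p + 1 := by linarith
        gcongr
    _ ≤ _ := natCast_sub_rpow_mul_le_sum_Ico hp hσ (Nat.div_le_self j 2) hV hVj

theorem sum_Icc_sum_Ico_half_div_le_sum_range (n : ℕ) {X : ℕ → ℝ} (hX : ∀ i < n, 0 ≤ X i) :
    ∑ j ∈ Icc 1 n, (∑ i ∈ Ico (j / 2) j, X i) / j ≤ ∑ i ∈ range n, X i := by
  simp_rw [sum_div]
  -- `i ∈ [j / 2, j)` iff `i < j ≤ 2 * i + 1`
  rw [sum_comm' (t' := range n) (s' := fun i ↦ Icc (i + 1) (min n (2 * i + 1))) (by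
    intro j i
    simp only [mem_Icc, mem_Ico, mem_range]
    omega)]
  gcongr with i hi
  have hXi := hX i (mem_range.1 hi)
  calc ∑ j ∈ Icc (i + 1) (min n (2 * i + 1)), X i / j
      ≤ ∑ j ∈ Icc (i + 1) (min n (2 * i + 1)), X i / (i + 1) := by
        gcongr with j hj
        exact_mod_cast (mem_Icc.1 hj).1
    _ ≤ (i + 1) * (X i / (i + 1)) := by
        rw [sum_const, nsmul_eq_mul]
        gcongr
        norm_cast
        rw [Nat.card_Icc]
        omega
    _ = X i := by field_simp

theorem stmt6_general (p σ : ℝ) (hp : 1 < p) (hσ : p - 1 < σ) (m : ℕ)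
    (V : ℕ → ℝ) (hdec : ∀ i, i < m → V (i + 1) < V i)
    (hpos : ∀ i, i ≤ m - 1 → 0 < V i) :
    (2 : ℝ) ^ (-p) * ((σ - p + 1) / (p - 1)) ^ (p - 1) *
        ∑ j ∈ Finset.Icc 1 (m - 1), (j : ℝ) ^ (p - 1) * (V j) ^ (σ - p + 1) ≤
      ∑ i ∈ Finset.range m, (V i) ^ σ / (V i - V (i + 1)) ^ (p - 1) := by
  have hterm_nonneg : ∀ i < m, 0 ≤ V i ^ σ / (V i - V (i + 1)) ^ (p - 1) := fun i hi ↦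
    div_nonneg (rpow_nonneg (hpos i (by omega)).le _) (rpow_nonneg (sub_pos.2 (hdec i hi)).le _)
  rw [mul_sum]
  calc _ ≤ ∑ j ∈ Icc 1 (m - 1),
          (∑ i ∈ Ico (j / 2) j, V i ^ σ / (V i - V (i + 1)) ^ (p - 1)) / j := by
        refine sum_le_sum fun j hj ↦ ?_
        obtain ⟨hj1, hjm⟩ := mem_Icc.1 hj
        refine rpow_mul_le_sum_Ico_half_div hp hσ hj1 fun i hi ↦ ?_
        have hij := (mem_Ico.1 hi).2
        exact ⟨hpos (i + 1) (by omega), hdec i (by omega)⟩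
    _ ≤ ∑ i ∈ range (m - 1), V i ^ σ / (V i - V (i + 1)) ^ (p - 1) :=
        sum_Icc_sum_Ico_half_div_le_sum_range (m - 1) fun i hi ↦ hterm_nonneg i (by omega)
    _ ≤ ∑ i ∈ range m, V i ^ σ / (V i - V (i + 1)) ^ (p - 1) :=
        sum_le_sum_of_subset_of_nonneg (range_subset_range.2 (Nat.sub_le m 1))
          fun i hi _ ↦ hterm_nonneg i (mem_range.1 hi)

/-- For `1 < p`, `σ > p - 1`, `r = p - 1`, `η = σ - p + 1`,
`c_{p,σ} = 2^{-p}((σ-p+1)/(p-1))^{p-1}` and a strictly decreasing chain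
`V_0 > V_1 > ⋯ > V_m` with `V_i > 0` for `i ≤ m-1` and `V_m ≥ 0`, setting
`δ_i = V_i - V_{i+1}`, one has
`∑_{i=0}^{m-1} V_i^σ / δ_i^r ≥ c_{p,σ} ∑_{j=1}^{m-1} j^r V_j^η`. -/
theorem stmt6 (p σ : ℝ) (hp : 1 < p) (hσ : p - 1 < σ) (m : ℕ) (hm : 1 ≤ m)
    (V : ℕ → ℝ) (hdec : ∀ i, i < m → V (i + 1) < V i)
    (hpos : ∀ i, i ≤ m - 1 → 0 < V i) (hVm : 0 ≤ V m) :
    (2 : ℝ) ^ (-p) * ((σ - p + 1) / (p - 1)) ^ (p - 1) *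
        ∑ j ∈ Finset.Icc 1 (m - 1), (j : ℝ) ^ (p - 1) * (V j) ^ (σ - p + 1) ≤
      ∑ i ∈ Finset.range m, (V i) ^ σ / (V i - V (i + 1)) ^ (p - 1) :=
  stmt6_general p σ hp hσ m V hdec hpos
end

section
/- Let r > 0 and m ≥ 1. The function P : (0,∞)^m → ℝ defined by P(y_1,…,y_m) = (∑_{k=1}^{m} y_k^{−1/r})^{−r} is concave on the positive orthant and nondecreasing in each coordinate. -/
/-!
Write `s = 1 / r` and `P y = (∑ k, y k ^ (-s)) ^ (-r)`. Since `P (c • y) = c * P y` for `c ≥ 0`,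
concavity reduces to superadditivity `P y + P z ≤ P (y + z)`. With `A = P y`, `B = P z` we have
`∑ k, y k ^ (-s) = A ^ (-s)`, so it suffices that
`(A + B) ^ (1 + s) * (u + v) ^ (-s) ≤ A ^ (1 + s) * u ^ (-s) + B ^ (1 + s) * v ^ (-s)`
coordinatewise: this is subadditivity of the perspective `(c, x) ↦ c * (x / c) ^ (-s)` of the
convex function `x ↦ x ^ (-s)`, which is jointly convex and homogeneous.
-/

open Real Set Finset

theorem convexOn_rpow_neg {s : ℝ} (hs : 0 ≤ s) : ConvexOn ℝ (Ioi 0) fun x : ℝ ↦ x ^ (-s) := by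
  refine ⟨convex_Ioi 0, fun x hx y hy a b ha hb hab ↦ ?_⟩
  have hlog := strictConcaveOn_log_Ioi.concaveOn.2 hx hy ha hb hab
  simp only [smul_eq_mul] at hlog ⊢
  have hxy : 0 < a * x + b * y := convex_Ioi 0 hx hy ha hb hab
  calc (a * x + b * y) ^ (-s) = exp (log (a * x + b * y) * -s) := rpow_def_of_pos hxy _
    _ ≤ exp (a * (log x * -s) + b * (log y * -s)) := exp_le_exp.2 (by nlinarith)
    _ ≤ a * exp (log x * -s) + b * exp (log y * -s) := convexOn_exp.2 trivial trivial ha hb hab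
    _ = a * x ^ (-s) + b * y ^ (-s) := by rw [rpow_def_of_pos hx, rpow_def_of_pos hy]

theorem add_rpow_one_add_mul_add_rpow_neg_le {s A B u v : ℝ} (hs : 0 ≤ s) (hA : 0 < A)
    (hB : 0 < B) (hu : 0 < u) (hv : 0 < v) :
    (A + B) ^ (1 + s) * (u + v) ^ (-s) ≤ A ^ (1 + s) * u ^ (-s) + B ^ (1 + s) * v ^ (-s) := by
  have perspective : ∀ {c x : ℝ}, 0 < c → 0 < x → c * (x / c) ^ (-s) = c ^ (1 + s) * x ^ (-s) := by
    intro c x hc hx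
    rw [div_rpow hx.le hc.le, rpow_neg hc.le, rpow_add hc, rpow_one]
    field_simp
  have hAB : 0 < A + B := add_pos hA hB
  have h := (convexOn_rpow_neg hs).2 (mem_Ioi.2 (div_pos hu hA)) (mem_Ioi.2 (div_pos hv hB))
    (div_pos hA hAB).le (div_pos hB hAB).le (by field_simp)
  simp only [smul_eq_mul] at h
  rw [show A / (A + B) * (u / A) + B / (A + B) * (v / B) = (u + v) / (A + B) by field_simp] at h
  rw [← perspective hAB (add_pos hu hv), ← perspective hA hu, ← perspective hB hv,
    ← le_div_iff₀' hAB]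
  convert h using 1
  field_simp

section ParallelSum

variable {ι : Type*} [Fintype ι] {r : ℝ}

noncomputable def parallelSum (r : ℝ) (y : ι → ℝ) : ℝ := (∑ k, y k ^ (-(1 / r))) ^ (-r)

theorem sum_rpow_neg_pos [Nonempty ι] (s : ℝ) {y : ι → ℝ} (hy : ∀ k, 0 < y k) :
    0 < ∑ k, y k ^ (-s) :=
  Finset.sum_pos (fun k _ ↦ rpow_pos_of_pos (hy k) _) univ_nonempty

theorem parallelSum_pos [Nonempty ι] {y : ι → ℝ} (hy : ∀ k, 0 < y k) : 0 < parallelSum r y :=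
  rpow_pos_of_pos (sum_rpow_neg_pos _ hy) _

theorem parallelSum_rpow_neg_inv (hr : r ≠ 0) {y : ι → ℝ} (hy : ∀ k, 0 ≤ y k) :
    parallelSum r y ^ (-(1 / r)) = ∑ k, y k ^ (-(1 / r)) := by
  rw [parallelSum, ← rpow_mul (sum_nonneg fun k _ ↦ rpow_nonneg (hy k) _),
    show -r * -(1 / r) = 1 by field_simp, rpow_one]

theorem le_parallelSum_of_sum_le [Nonempty ι] (hr : 0 < r) {c : ℝ} (hc : 0 < c) {y : ι → ℝ}
    (hy : ∀ k, 0 < y k) (h : ∑ k, y k ^ (-(1 / r)) ≤ c ^ (-(1 / r))) : c ≤ parallelSum r y := by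
  calc c = (c ^ (-(1 / r))) ^ (-r) := by
        rw [← rpow_mul hc.le, show -(1 / r) * -r = 1 by field_simp, rpow_one]
    _ ≤ parallelSum r y :=
        rpow_le_rpow_of_nonpos (sum_rpow_neg_pos _ hy) h (neg_nonpos.2 hr.le)

theorem parallelSum_smul (hr : r ≠ 0) {c : ℝ} (hc : 0 ≤ c) {y : ι → ℝ} (hy : ∀ k, 0 ≤ y k) :
    parallelSum r (c • y) = c * parallelSum r y := by
  have hsum : ∑ k, (c • y) k ^ (-(1 / r)) = c ^ (-(1 / r)) * ∑ k, y k ^ (-(1 / r)) := by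
    rw [mul_sum]
    exact sum_congr rfl fun k _ ↦ mul_rpow hc (hy k)
  rw [parallelSum, hsum, mul_rpow (rpow_nonneg hc _) (sum_nonneg fun k _ ↦ rpow_nonneg (hy k) _),
    ← rpow_mul hc, show -(1 / r) * -r = 1 by field_simp, rpow_one, parallelSum]

theorem parallelSum_add_le [Nonempty ι] (hr : 0 < r) {y z : ι → ℝ} (hy : ∀ k, 0 < y k)
    (hz : ∀ k, 0 < z k) : parallelSum r y + parallelSum r z ≤ parallelSum r (y + z) := by
  set A := parallelSum r y
  set B := parallelSum r z
  have hA : 0 < A := parallelSum_pos hy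
  have hB : 0 < B := parallelSum_pos hz
  have hAB : 0 < A + B := add_pos hA hB
  have hs : 0 ≤ 1 / r := by positivity
  have hdiag : ∀ {c : ℝ}, 0 < c → c ^ (1 + 1 / r) * c ^ (-(1 / r)) = c := fun hc ↦ by
    rw [← rpow_add hc, add_neg_cancel_right, rpow_one]
  refine le_parallelSum_of_sum_le hr hAB (fun k ↦ add_pos (hy k) (hz k)) ?_
  rw [← mul_le_mul_iff_of_pos_left (rpow_pos_of_pos hAB (1 + 1 / r)), hdiag hAB]
  calc (A + B) ^ (1 + 1 / r) * ∑ k, (y + z) k ^ (-(1 / r))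
      ≤ ∑ k, (A ^ (1 + 1 / r) * y k ^ (-(1 / r)) + B ^ (1 + 1 / r) * z k ^ (-(1 / r))) := by
        rw [mul_sum]
        exact sum_le_sum fun k _ ↦ add_rpow_one_add_mul_add_rpow_neg_le hs hA hB (hy k) (hz k)
    _ = A + B := by
        rw [sum_add_distrib, ← mul_sum, ← mul_sum,
          ← parallelSum_rpow_neg_inv hr.ne' fun k ↦ (hy k).le,
          ← parallelSum_rpow_neg_inv hr.ne' fun k ↦ (hz k).le, hdiag hA, hdiag hB]

theorem concaveOn_parallelSum [Nonempty ι] (hr : 0 < r) :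
    ConcaveOn ℝ {y : ι → ℝ | ∀ k, 0 < y k} (parallelSum r) := by
  refine ⟨fun y hy z hz a b ha hb hab k ↦ convex_Ioi (0 : ℝ) (hy k) (hz k) ha hb hab,
    fun y hy z hz a b ha hb hab ↦ ?_⟩
  obtain rfl | ha := ha.eq_or_lt
  · simp [(zero_add b).symm.trans hab]
  obtain rfl | hb := hb.eq_or_lt
  · simp [(add_zero a).symm.trans hab]
  simp only [smul_eq_mul]
  rw [← parallelSum_smul hr.ne' ha.le fun k ↦ (hy k).le,
    ← parallelSum_smul hr.ne' hb.le fun k ↦ (hz k).le]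
  exact parallelSum_add_le hr (fun k ↦ mul_pos ha (hy k)) (fun k ↦ mul_pos hb (hz k))

theorem parallelSum_mono [Nonempty ι] (hr : 0 < r) {y z : ι → ℝ} (hy : ∀ k, 0 < y k)
    (hyz : ∀ k, y k ≤ z k) : parallelSum r y ≤ parallelSum r z := by
  have hs : -(1 / r) ≤ 0 := neg_nonpos.2 (by positivity)
  exact rpow_le_rpow_of_nonpos (sum_rpow_neg_pos _ fun k ↦ (hy k).trans_le (hyz k))
    (sum_le_sum fun k _ ↦ rpow_le_rpow_of_nonpos (hy k) (hyz k) hs) (neg_nonpos.2 hr.le)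

end ParallelSum

/-- The `p`-parallel-sum map `P(y_1,…,y_m) = (∑_k y_k^{-1/r})^{-r}` is concave on the
positive orthant and nondecreasing in each coordinate. -/
theorem stmt9 (r : ℝ) (hr : 0 < r) (m : ℕ) (hm : 1 ≤ m) :
    ConcaveOn ℝ {y : Fin m → ℝ | ∀ k, 0 < y k}
      (fun y : Fin m → ℝ => (∑ k, (y k) ^ (-(1 / r))) ^ (-r)) ∧
    ∀ y z : Fin m → ℝ, (∀ k, 0 < y k) → (∀ k, 0 < z k) → (∀ k, y k ≤ z k) →
      (∑ k, (y k) ^ (-(1 / r))) ^ (-r) ≤ (∑ k, (z k) ^ (-(1 / r))) ^ (-r) := by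
  have : Nonempty (Fin m) := ⟨⟨0, hm⟩⟩
  exact ⟨concaveOn_parallelSum hr, fun y _ hy _ hyz ↦ parallelSum_mono hr hy hyz⟩
end

section
/- Let r > 0 and η > 0 be real numbers, let (b_k)_{k≥0} be a sequence of positive real numbers, and set M_n = ∑_{k=0}^{n} b_k. If ∑_{n=1}^{∞} n^{r + η + η/r} / M_n^{η/r} = ∞, then ∑_{n=1}^{∞} n^r (∑_{k=n}^{∞} b_k^{−1/r})^η = ∞, where the inner sum ∑_{k=n}^{∞} b_k^{−1/r} and the outer sums are taken in [0,∞]. -/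
/-!
Hölder's inequality on the window `n ≤ k ≤ 2n` gives `n ^ (r + 1) ≤ M_{2n} * A_n ^ r` with
`A_n = ∑_{k=n}^{2n} b_k ^ (-1/r)`, which is at most the tail sum. Raised to the power `η / r`
this bounds `n ^ (r+η+η/r) / M_{2n} ^ (η/r)` by `n ^ r * A_n ^ η`. As `M` increases, the terms
of index `2n` and `2n + 1` of the divergent series are at most `3 ^ (r+η+η/r)` times this bound,
so that series is dominated by a constant multiple of the series in the conclusion.
-/

open Finset Real
open scoped ENNReal

theorem Finset.card_rpow_le_sum_mul_sum_rpow_neg {ι : Type*} (s : Finset ι) {x : ι → ℝ}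
    (hx : ∀ i ∈ s, 0 < x i) {p : ℝ} (hp : 0 < p) :
    (#s : ℝ) ^ (p + 1) ≤ (∑ i ∈ s, x i) * (∑ i ∈ s, x i ^ (-(1 / p))) ^ p := by
  have hpq : (p + 1).HolderConjugate ((p + 1) / p) := by
    rw [Real.holderConjugate_iff]
    exact ⟨by linarith, by field_simp; ring⟩
  have holder := Real.inner_le_Lp_mul_Lq_of_nonneg s hpq
    (f := fun i => x i ^ (1 / (p + 1))) (g := fun i => x i ^ (-(1 / (p + 1))))
    (fun i hi => (rpow_pos_of_pos (hx i hi) _).le)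
    (fun i hi => (rpow_pos_of_pos (hx i hi) _).le)
  have hcard : ∑ i ∈ s, x i ^ (1 / (p + 1)) * x i ^ (-(1 / (p + 1))) = #s := by
    rw [card_eq_sum_ones, Nat.cast_sum]
    refine sum_congr rfl fun i hi => ?_
    rw [← rpow_add (hx i hi), add_neg_cancel, rpow_zero, Nat.cast_one]
  have hsum : ∑ i ∈ s, (x i ^ (1 / (p + 1))) ^ (p + 1) = ∑ i ∈ s, x i :=
    sum_congr rfl fun i hi => by
      rw [← rpow_mul (hx i hi).le, one_div_mul_cancel (by positivity), rpow_one]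
  have hsum_neg :
      ∑ i ∈ s, (x i ^ (-(1 / (p + 1)))) ^ ((p + 1) / p) = ∑ i ∈ s, x i ^ (-(1 / p)) :=
    sum_congr rfl fun i hi => by
      rw [← rpow_mul (hx i hi).le]
      congr 1
      field_simp
  rw [hcard, hsum, hsum_neg, one_div_div] at holder
  have hS : 0 ≤ ∑ i ∈ s, x i := sum_nonneg fun i hi => (hx i hi).le
  have hA : 0 ≤ ∑ i ∈ s, x i ^ (-(1 / p)) :=
    sum_nonneg fun i hi => (rpow_pos_of_pos (hx i hi) _).le
  calc (#s : ℝ) ^ (p + 1)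
      ≤ ((∑ i ∈ s, x i) ^ (1 / (p + 1)) *
          (∑ i ∈ s, x i ^ (-(1 / p))) ^ (p / (p + 1))) ^ (p + 1) :=
        rpow_le_rpow (by positivity) holder (by positivity)
    _ = (∑ i ∈ s, x i) * (∑ i ∈ s, x i ^ (-(1 / p))) ^ p := by
        rw [mul_rpow (by positivity) (by positivity), ← rpow_mul hS, ← rpow_mul hA,
          one_div_mul_cancel (by positivity), div_mul_cancel₀ _ (by positivity), rpow_one]

section PartialSums

variable {r η : ℝ} {b : ℕ → ℝ}

theorem rpow_add_one_le_sum_range_mul_sum_window_rpow (hr : 0 < r) (hb : ∀ k, 0 < b k)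
    (n : ℕ) :
    (n : ℝ) ^ (r + 1) ≤ (∑ k ∈ range (2 * n + 1), b k) *
      (∑ k ∈ range (n + 1), b (n + k) ^ (-(1 / r))) ^ r := by
  have hwindow : ∑ k ∈ range (n + 1), b (n + k) ≤ ∑ k ∈ range (2 * n + 1), b k := by
    rw [show 2 * n + 1 = n + (n + 1) by ring, sum_range_add b n (n + 1)]
    exact le_add_of_nonneg_left (sum_nonneg fun k _ => (hb k).le)
  calc (n : ℝ) ^ (r + 1) ≤ (#(range (n + 1)) : ℝ) ^ (r + 1) := by
        rw [card_range]; gcongr; simp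
    _ ≤ (∑ k ∈ range (n + 1), b (n + k)) *
          (∑ k ∈ range (n + 1), b (n + k) ^ (-(1 / r))) ^ r :=
        card_rpow_le_sum_mul_sum_rpow_neg _ (fun k _ => hb (n + k)) hr
    _ ≤ _ := mul_le_mul_of_nonneg_right hwindow
        (rpow_nonneg (sum_nonneg fun k _ => (rpow_pos_of_pos (hb _) _).le) _)

theorem rpow_div_sum_range_rpow_le (hr : 0 < r) (hη : 0 ≤ η) (hb : ∀ k, 0 < b k) (n : ℕ) :
    (n : ℝ) ^ (r + η + η / r) / (∑ k ∈ range (2 * n + 1), b k) ^ (η / r) ≤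
      (n : ℝ) ^ r * (∑ k ∈ range (n + 1), b (n + k) ^ (-(1 / r))) ^ η := by
  set M := ∑ k ∈ range (2 * n + 1), b k
  set A := ∑ k ∈ range (n + 1), b (n + k) ^ (-(1 / r))
  have hM : 0 < M := sum_pos (fun k _ => hb k) nonempty_range_add_one
  have hA : 0 ≤ A := sum_nonneg fun k _ => (rpow_pos_of_pos (hb _) _).le
  have hn : (0 : ℝ) ≤ n := n.cast_nonneg
  rw [div_le_iff₀ (rpow_pos_of_pos hM _)]
  calc (n : ℝ) ^ (r + η + η / r) = (n : ℝ) ^ r * ((n : ℝ) ^ (r + 1)) ^ (η / r) := by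
        rw [← rpow_mul hn, ← rpow_add' hn (by positivity)]
        congr 1
        field_simp
        ring
    _ ≤ (n : ℝ) ^ r * (M * A ^ r) ^ (η / r) := by
        gcongr
        exact rpow_add_one_le_sum_range_mul_sum_window_rpow hr hb n
    _ = (n : ℝ) ^ r * A ^ η * M ^ (η / r) := by
        rw [mul_rpow hM.le (by positivity), ← rpow_mul hA, mul_div_cancel₀ _ hr.ne']
        ring

theorem ofReal_rpow_div_sum_range_rpow_le (hr : 0 < r) (hη : 0 ≤ η) (hb : ∀ k, 0 < b k)
    {m : ℕ} (hm : 2 ≤ m) :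
    ENNReal.ofReal ((m : ℝ) ^ (r + η + η / r) / (∑ k ∈ range (m + 1), b k) ^ (η / r)) ≤
      ENNReal.ofReal (3 ^ (r + η + η / r)) * (ENNReal.ofReal (((m / 2 : ℕ) : ℝ) ^ r) *
        (∑' k : ℕ, ENNReal.ofReal (b (m / 2 + k) ^ (-(1 / r)))) ^ η) := by
  set n := m / 2
  set p := r + η + η / r
  have hp : 0 ≤ p := by positivity
  have hm3 : (m : ℝ) ≤ 3 * n := by
    have : m ≤ 3 * n := by omega
    exact_mod_cast this
  have hM : ∑ k ∈ range (2 * n + 1), b k ≤ ∑ k ∈ range (m + 1), b k :=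
    sum_le_sum_of_subset_of_nonneg (range_subset_range.mpr (by omega)) fun k _ _ => (hb k).le
  have hM_pos : 0 < ∑ k ∈ range (2 * n + 1), b k :=
    sum_pos (fun k _ => hb k) nonempty_range_add_one
  have hA : 0 ≤ ∑ k ∈ range (n + 1), b (n + k) ^ (-(1 / r)) :=
    sum_nonneg fun k _ => (rpow_pos_of_pos (hb _) _).le
  calc ENNReal.ofReal ((m : ℝ) ^ p / (∑ k ∈ range (m + 1), b k) ^ (η / r))
      ≤ ENNReal.ofReal
          (3 ^ p * ((n : ℝ) ^ p / (∑ k ∈ range (2 * n + 1), b k) ^ (η / r))) := by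
        refine ENNReal.ofReal_le_ofReal ?_
        rw [← mul_div_assoc, ← mul_rpow (by norm_num) n.cast_nonneg]
        gcongr
    _ ≤ ENNReal.ofReal (3 ^ p) * ENNReal.ofReal ((n : ℝ) ^ r *
          (∑ k ∈ range (n + 1), b (n + k) ^ (-(1 / r))) ^ η) := by
        rw [ENNReal.ofReal_mul (by positivity)]
        gcongr
        exact rpow_div_sum_range_rpow_le hr hη hb n
    _ ≤ _ := by
        rw [ENNReal.ofReal_mul (by positivity), ← ENNReal.ofReal_rpow_of_nonneg hA hη,
          ENNReal.ofReal_sum_of_nonneg fun k _ => (rpow_pos_of_pos (hb _) _).le]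
        gcongr
        exact ENNReal.sum_le_tsum _

end PartialSums

theorem ENNReal.tsum_le_two_mul_tsum_of_le_div_two {f g : ℕ → ℝ≥0∞}
    (h : ∀ m, f m ≤ g (m / 2)) :
    ∑' m, f m ≤ 2 * ∑' n, g n := by
  rw [← tsum_even_add_odd ENNReal.summable ENNReal.summable, two_mul]
  gcongr with k k
  · simpa using h (2 * k)
  · simpa [show (2 * k + 1) / 2 = k by omega] using h (2 * k + 1)

/-- For `r, η > 0` and positive `(b_k)` with partial sums `M_n = ∑_{k=0}^{n} b_k`:
if `∑_{n≥1} n^{r+η+η/r} / M_n^{η/r} = ∞`, then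
`∑_{n≥1} n^r (∑_{k=n}^{∞} b_k^{-1/r})^η = ∞`, the sums being taken in `[0,∞]`
(the inner tail sum `∑_{k=n}^{∞}` is written as `∑_{k=0}^{∞} b_{n+k}^{-1/r}`; the terms
with `n = 0` vanish since `0^s = 0` for `s > 0`). -/
theorem stmt11 (r η : ℝ) (hr : 0 < r) (hη : 0 < η) (b : ℕ → ℝ) (hb : ∀ k, 0 < b k)
    (hdiv : ∑' n : ℕ, ENNReal.ofReal
        ((n : ℝ) ^ (r + η + η / r) / (∑ k ∈ Finset.range (n + 1), b k) ^ (η / r)) = ⊤) :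
    ∑' n : ℕ, ENNReal.ofReal ((n : ℝ) ^ r) *
        (∑' k : ℕ, ENNReal.ofReal ((b (n + k)) ^ (-(1 / r)))) ^ η = ⊤ := by
  set H : ℕ → ℝ≥0∞ := fun m => ENNReal.ofReal
    ((m : ℝ) ^ (r + η + η / r) / (∑ k ∈ range (m + 1), b k) ^ (η / r))
  set T : ℕ → ℝ≥0∞ := fun n => ENNReal.ofReal ((n : ℝ) ^ r) *
    (∑' k : ℕ, ENNReal.ofReal ((b (n + k)) ^ (-(1 / r)))) ^ η
  set C := ENNReal.ofReal (3 ^ (r + η + η / r))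
  by_contra hT
  have htail : ∑' m, H (m + 2) ≤ 2 * ∑' n, C * T (n + 1) :=
    ENNReal.tsum_le_two_mul_tsum_of_le_div_two fun m => by
      have hm := ofReal_rpow_div_sum_range_rpow_le hr hη.le hb (m := m + 2) (by omega)
      rwa [show (m + 2) / 2 = m / 2 + 1 by omega] at hm
  have hT_shift : ∑' n, T (n + 1) ≤ ∑' n, T n :=
    ENNReal.tsum_comp_le_tsum_of_injective (add_left_injective 1) T
  rw [← ENNReal.summable.sum_add_tsum_nat_add' (k := 2)] at hdiv
  refine ENNReal.add_ne_top.2 ⟨ENNReal.sum_ne_top.2 fun _ _ => ENNReal.ofReal_ne_top,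
    ne_top_of_le_ne_top ?_ htail⟩ hdiv
  rw [ENNReal.tsum_mul_left]
  exact ENNReal.mul_ne_top ENNReal.ofNat_ne_top
    (ENNReal.mul_ne_top ENNReal.ofReal_ne_top (ne_top_of_le_ne_top hT hT_shift))
end
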